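/- arXiv:1201.2064 — 5 statements merged into one kernel-verified Lean document; each statement's English description precedes it below -/
import Mathlib

section
/- Let n = k·m with k, m positive integers, s an integer with gcd(s, m) = 1, and t₁, t₂, t₃ integers. If d is an integer solution of t₁·x² − t₃·x + t₂ ≡ 0 (mod m), then x₁ = 1, y₁ = t₁·s·k, x₂ = d, y₂ = (t₃ − d·t₁)·s·k is a solution of the system: x₁·y₁ ≡ t₁·s·k (mod n), x₂·y₂ ≡ t₂·s·k (mod n), x₁·y₂ + x₂·y₁ ≡ t₃·s·k (mod n). -/
theorem stmt_2 (k m : ℕ) (hk : 0 < k) (hm : 0 < m) (n : ℕ) (hn : n = k * m)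
    (s t₁ t₂ t₃ d : ℤ) (hs : Int.gcd s m = 1)
    (hd : Int.ModEq m (t₁ * d ^ 2 - t₃ * d + t₂) 0) :
    Int.ModEq n (1 * (t₁ * s * k)) (t₁ * s * k) ∧
    Int.ModEq n (d * ((t₃ - d * t₁) * s * k)) (t₂ * s * k) ∧
    Int.ModEq n (1 * ((t₃ - d * t₁) * s * k) + d * (t₁ * s * k)) (t₃ * s * k) := by
  refine ⟨by rw [one_mul], ?_, by rw [one_mul]; unfold Int.ModEq; ring_nf⟩
  have h : (m : ℤ) ∣ (t₁ * d ^ 2 - t₃ * d + t₂) := Int.modEq_zero_iff_dvd.mp hd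
  obtain ⟨c, hc⟩ := h
  have : (n : ℤ) ∣ (t₂ * s * k - d * ((t₃ - d * t₁) * s * k)) := by
    refine ⟨c * s, ?_⟩
    push_cast [hn]
    linear_combination (s * (k:ℤ)) * hc
  exact Int.modEq_iff_dvd.mpr this
end

section
/- Let n = k·m with k, m positive integers, s an integer with gcd(s, m) = 1, and t₁, t₂, t₃ integers. If the system x₁·y₁ ≡ t₁·s·k (mod n), x₂·y₂ ≡ t₂·s·k (mod n), x₁·y₂ + x₂·y₁ ≡ t₃·s·k (mod n) has an integer solution (x₁, y₁, x₂, y₂), then the congruence x² − t₃·x + t₁·t₂ ≡ 0 (mod m) has an integer solution. -/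
/-!
Put `u = x₁ y₂` and `v = x₂ y₁`. Then `k ∣ u + v` and `k² ∣ u v = (x₁ y₁)(x₂ y₂)`, which forces
`k ∣ u` and `k ∣ v`. The quotients
`u / k` and `v / k` have sum `≡ t₃ s` and product `≡ t₁ t₂ s²` modulo `m`, so `s⁻¹ · u / k` is a
root of `X² - t₃ X + t₁ t₂` modulo `m`.
-/

open Polynomial

theorem Int.dvd_of_dvd_add_of_sq_dvd_mul {K u v : ℤ} (hsum : K ∣ u + v) (hprod : K ^ 2 ∣ u * v) :
    K ∣ u := by
  rcases eq_or_ne K 0 with rfl | hK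
  · have hv : v = -u := by simpa [add_eq_zero_iff_eq_neg'] using hsum
    simpa [hv] using hprod
  obtain ⟨S, hS⟩ := hsum
  obtain ⟨P, hP⟩ := hprod
  have hK' : (K : ℚ) ≠ 0 := by exact_mod_cast hK
  -- `u / K` is a root of the monic integer polynomial `X² - S X + P`, hence an integer.
  have hroot : aeval ((u : ℚ) / K) (X ^ 2 - C S * X + C P) = 0 := by
    have hv : (v : ℚ) = K * S - u := by rw [eq_sub_iff_add_eq']; exact_mod_cast hS
    have hP' : (u : ℚ) * v = K ^ 2 * P := by exact_mod_cast hP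
    simp only [map_add, map_sub, map_mul, map_pow, aeval_X, eq_intCast, map_intCast]
    field_simp
    rw [hv] at hP'
    linear_combination -hP'
  have hmonic : (X ^ 2 - C S * X + C P).Monic := by monicity!
  obtain ⟨r, hr, -⟩ := exists_integer_of_is_root_of_monic hmonic hroot
  refine ⟨r, ?_⟩
  rw [algebraMap_int_eq, eq_intCast, div_eq_iff hK'] at hr
  exact_mod_cast hr.trans (mul_comm _ _)

theorem Int.exists_eq_mul_modEq_of_modEq_mul {k m x t : ℤ} (hk : k ≠ 0)
    (h : x ≡ t * k [ZMOD k * m]) : ∃ a, x = k * a ∧ a ≡ t [ZMOD m] := by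
  have hx : x ≡ 0 [ZMOD k] :=
    (h.of_mul_right m).trans (Int.modEq_zero_iff_dvd.mpr (dvd_mul_left k t))
  obtain ⟨a, rfl⟩ := Int.modEq_zero_iff_dvd.mp hx
  rw [mul_comm t] at h
  exact ⟨a, rfl, Int.ModEq.mul_left_cancel' hk h⟩

theorem Int.exists_sq_sub_mul_add_modEq_zero {m : ℕ} {s T P α β : ℤ} (hs : IsCoprime s m)
    (hsum : α + β ≡ T * s [ZMOD m]) (hprod : α * β ≡ P * s ^ 2 [ZMOD m]) :
    ∃ x, x ^ 2 - T * x + P ≡ 0 [ZMOD m] := by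
  obtain ⟨a, b, hab⟩ := hs
  refine ⟨a * α, (ZMod.intCast_eq_intCast_iff _ _ m).mp ?_⟩
  rw [← ZMod.intCast_eq_intCast_iff] at hsum hprod
  have hab' : (a : ZMod m) * s = 1 := by
    simpa using congrArg (Int.cast : ℤ → ZMod m) hab
  push_cast at hsum hprod ⊢
  linear_combination (a : ZMod m) ^ 2 * α * hsum - (a : ZMod m) ^ 2 * hprod
    + (T * a * α - P * ((a : ZMod m) * s + 1)) * hab'

theorem stmt_3_general (k m : ℕ) (hk : 0 < k) (n : ℕ) (hn : n = k * m)
    (s t₁ t₂ t₃ : ℤ) (hs : Int.gcd s m = 1)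
    (h : ∃ x₁ y₁ x₂ y₂ : ℤ,
      Int.ModEq n (x₁ * y₁) (t₁ * s * k) ∧
      Int.ModEq n (x₂ * y₂) (t₂ * s * k) ∧
      Int.ModEq n (x₁ * y₂ + x₂ * y₁) (t₃ * s * k)) :
    ∃ x : ℤ, Int.ModEq m (x ^ 2 - t₃ * x + t₁ * t₂) 0 := by
  obtain ⟨x₁, y₁, x₂, y₂, h₁, h₂, h₃⟩ := h
  rw [hn, Nat.cast_mul] at h₁ h₂ h₃
  have hk : (k : ℤ) ≠ 0 := by exact_mod_cast hk.ne'
  obtain ⟨a₁, e₁, h₁⟩ := Int.exists_eq_mul_modEq_of_modEq_mul hk h₁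
  obtain ⟨a₂, e₂, h₂⟩ := Int.exists_eq_mul_modEq_of_modEq_mul hk h₂
  obtain ⟨w, e₃, h₃⟩ := Int.exists_eq_mul_modEq_of_modEq_mul hk h₃
  have hprod : (x₁ * y₂) * (x₂ * y₁) = k ^ 2 * (a₁ * a₂) := by
    linear_combination (x₂ * y₂) * e₁ + k * a₁ * e₂
  obtain ⟨u, hu⟩ := Int.dvd_of_dvd_add_of_sq_dvd_mul ⟨w, e₃⟩ ⟨_, hprod⟩
  have huv : u * (w - u) = a₁ * a₂ := by
    refine mul_left_cancel₀ (pow_ne_zero 2 hk) ?_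
    linear_combination hprod - k * u * e₃ + (k * u - x₂ * y₁) * hu
  refine Int.exists_sq_sub_mul_add_modEq_zero (α := u) (β := w - u)
    (Int.isCoprime_iff_gcd_eq_one.mpr hs) (by simpa using h₃) ?_
  rw [huv]
  convert h₁.mul h₂ using 1
  ring

theorem stmt_3 (k m : ℕ) (hk : 0 < k) (hm : 0 < m) (n : ℕ) (hn : n = k * m)
    (s t₁ t₂ t₃ : ℤ) (hs : Int.gcd s m = 1)
    (h : ∃ x₁ y₁ x₂ y₂ : ℤ,
      Int.ModEq n (x₁ * y₁) (t₁ * s * k) ∧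
      Int.ModEq n (x₂ * y₂) (t₂ * s * k) ∧
      Int.ModEq n (x₁ * y₂ + x₂ * y₁) (t₃ * s * k)) :
    ∃ x : ℤ, Int.ModEq m (x ^ 2 - t₃ * x + t₁ * t₂) 0 :=
  stmt_3_general k m hk n hn s t₁ t₂ t₃ hs h
end

section
/- Let m be a positive integer. The congruence x² + x + 1 ≡ 0 (mod m) has an integer solution if and only if m is odd, 9 does not divide m, and for every prime p > 3 dividing m, −3 is a quadratic residue modulo p. -/
/-!
Completing the square gives `(2y + 1)² = 4(y² + y + 1) - 3`. Hence, for a prime `p > 3`, a root of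
`y² + y + 1` modulo `p` amounts to a square root of `-3`, and it is a simple root, so Hensel's lemma
lifts it to `ℤ_p` and therefore to every `ZMod (p ^ k)`. There is no root modulo `2` or `9`, and `1`
is a root modulo `3`; the Chinese remainder theorem assembles the prime-power cases.
-/

/-- `a` is a quadratic residue modulo the prime `p`: `p ∤ a` and `x² ≡ a (mod p)`
is solvable. -/
def IsQuadraticResidue (a : ℤ) (p : ℕ) : Prop :=
  ¬ (p : ℤ) ∣ a ∧ ∃ x : ℤ, Int.ModEq p (x ^ 2) a

open Polynomial IsLocalRing PadicInt

theorem PadicInt.exists_isRoot_of_isRoot_map_toZMod {p : ℕ} [Fact p.Prime] {f : ℤ_[p][X]}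
    (hf : f.Monic) {y : ZMod p} (hy : (f.map toZMod).IsRoot y)
    (hy' : (f.map toZMod).derivative.eval y ≠ 0) : ∃ z : ℤ_[p], f.IsRoot z := by
  obtain ⟨a₀, rfl⟩ := ZMod.ringHom_surjective toZMod y
  have mem_maximalIdeal {a : ℤ_[p]} : a ∈ maximalIdeal ℤ_[p] ↔ toZMod a = 0 := by
    rw [← ker_toZMod, RingHom.mem_ker]
  obtain ⟨z, hz, -⟩ := HenselianRing.is_henselian (I := maximalIdeal ℤ_[p]) f hf a₀
    (by rwa [mem_maximalIdeal, ← eval_map_apply])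
    ((notMem_maximalIdeal.mp (by rwa [mem_maximalIdeal, ← eval_map_apply, ← derivative_map])).map _)
  exact ⟨z, hz⟩

theorem isQuadraticResidue_iff_zmod {a : ℤ} {p : ℕ} :
    IsQuadraticResidue a p ↔ (a : ZMod p) ≠ 0 ∧ IsSquare (a : ZMod p) := by
  refine and_congr (ZMod.intCast_zmod_eq_zero_iff_dvd a p).not.symm ⟨?_, ?_⟩
  · rintro ⟨x, hx⟩
    exact ⟨x, by rw [← (ZMod.intCast_eq_intCast_iff _ _ _).2 hx]; push_cast; ring⟩
  · rintro ⟨r, hr⟩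
    obtain ⟨x, rfl⟩ := ZMod.intCast_surjective r
    exact ⟨x, (ZMod.intCast_eq_intCast_iff _ _ _).1 (by push_cast; rw [hr, sq])⟩

section SqAddAddOne

variable {R S : Type*} [CommRing R] [CommRing S]

theorem exists_sq_add_add_one_eq_zero_of_ringHom (f : R →+* S)
    (h : ∃ y : R, y ^ 2 + y + 1 = 0) : ∃ z : S, z ^ 2 + z + 1 = 0 := by
  obtain ⟨y, hy⟩ := h
  exact ⟨f y, by rw [← map_pow, ← map_add, ← map_one f, ← map_add, hy, map_zero]⟩

theorem two_mul_add_one_sq_of_sq_add_add_one_eq_zero {y : R} (hy : y ^ 2 + y + 1 = 0) :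
    (2 * y + 1) ^ 2 = -3 := by
  linear_combination 4 * hy

theorem exists_sq_add_add_one_eq_zero_iff_isSquare {K : Type*} [Field K] (h2 : (2 : K) ≠ 0) :
    (∃ y : K, y ^ 2 + y + 1 = 0) ↔ IsSquare (-3 : K) := by
  constructor
  · rintro ⟨y, hy⟩
    exact ⟨2 * y + 1, by rw [← sq, two_mul_add_one_sq_of_sq_add_add_one_eq_zero hy]⟩
  · rintro ⟨r, hr⟩
    refine ⟨(r - 1) / 2, ?_⟩
    field_simp
    linear_combination -hr

end SqAddAddOne

theorem ZMod.natCast_ne_zero_of_prime_ne {p q : ℕ} (hp : p.Prime) (hq : q.Prime) (hpq : p ≠ q) :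
    (q : ZMod p) ≠ 0 := by
  rwa [Ne, ZMod.natCast_eq_zero_iff, Nat.prime_dvd_prime_iff_eq hp hq]

theorem exists_intModEq_sq_add_add_one_iff (m : ℕ) :
    (∃ x : ℤ, x ^ 2 + x + 1 ≡ 0 [ZMOD m]) ↔ ∃ y : ZMod m, y ^ 2 + y + 1 = 0 := by
  refine ⟨fun ⟨x, hx⟩ => ⟨x, ?_⟩, fun ⟨y, hy⟩ => ?_⟩
  · simpa using (ZMod.intCast_eq_intCast_iff _ _ _).2 hx
  · obtain ⟨x, rfl⟩ := ZMod.intCast_surjective y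
    exact ⟨x, (ZMod.intCast_eq_intCast_iff _ _ _).1 (by push_cast; exact hy)⟩

namespace ZMod

variable {p : ℕ} [Fact p.Prime]

theorem exists_sq_add_add_one_eq_zero_iff_isQuadraticResidue (hp2 : p ≠ 2) (hp3 : p ≠ 3) :
    (∃ y : ZMod p, y ^ 2 + y + 1 = 0) ↔ IsQuadraticResidue (-3) p := by
  have hp : p.Prime := Fact.out
  have h2 : (2 : ZMod p) ≠ 0 := by exact_mod_cast natCast_ne_zero_of_prime_ne hp Nat.prime_two hp2
  have h3 : (3 : ZMod p) ≠ 0 := by exact_mod_cast natCast_ne_zero_of_prime_ne hp Nat.prime_three hp3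
  rw [isQuadraticResidue_iff_zmod, exists_sq_add_add_one_eq_zero_iff_isSquare h2]
  push_cast
  exact (and_iff_right (neg_ne_zero.2 h3)).symm

theorem exists_sq_add_add_one_eq_zero_primePow (hp3 : p ≠ 3) (h : ∃ y : ZMod p, y ^ 2 + y + 1 = 0)
    (k : ℕ) : ∃ y : ZMod (p ^ k), y ^ 2 + y + 1 = 0 := by
  obtain ⟨y, hy⟩ := h
  have h3 : (3 : ZMod p) ≠ 0 := by
    exact_mod_cast natCast_ne_zero_of_prime_ne Fact.out Nat.prime_three hp3
  have hsimple : 2 * y + 1 ≠ 0 := fun h0 => h3 <| neg_eq_zero.1 <| by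
    rw [← two_mul_add_one_sq_of_sq_add_add_one_eq_zero hy, h0, sq, zero_mul]
  obtain ⟨z, hz⟩ := exists_isRoot_of_isRoot_map_toZMod (f := X ^ 2 + X + 1) (by monicity!)
    (y := y) (by simpa using hy) (by simpa [one_add_one_eq_two] using hsimple)
  exact exists_sq_add_add_one_eq_zero_of_ringHom (toZModPow k) ⟨z, by simpa using hz⟩

end ZMod

theorem exists_sq_add_add_one_eq_zero_zmod_ordProj {m p : ℕ} (hodd : Odd m) (h9 : ¬ 9 ∣ m)
    (hqr : ∀ p : ℕ, p.Prime → 3 < p → p ∣ m → IsQuadraticResidue (-3) p)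
    (hp : p ∈ m.primeFactors) : ∃ y : ZMod (p ^ m.factorization p), y ^ 2 + y + 1 = 0 := by
  have hpp := Nat.prime_of_mem_primeFactors hp
  have hpm := Nat.dvd_of_mem_primeFactors hp
  have := Fact.mk hpp
  rcases lt_trichotomy p 3 with hlt | rfl | hgt
  · have : p = 2 := by have := hpp.two_le; omega
    subst this
    exact absurd hodd (Nat.not_odd_iff_even.2 (even_iff_two_dvd.2 hpm))
  · have hk : m.factorization 3 = 1 := by
      have hpos := hpp.factorization_pos_of_dvd hodd.pos.ne' hpm
      have hle : m.factorization 3 ≤ 1 := by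
        by_contra! h2
        exact h9 ((pow_dvd_pow 3 h2).trans (Nat.ordProj_dvd m 3))
      omega
    rw [hk, pow_one]
    exact ⟨1, rfl⟩
  · exact ZMod.exists_sq_add_add_one_eq_zero_primePow hgt.ne'
      ((ZMod.exists_sq_add_add_one_eq_zero_iff_isQuadraticResidue (by omega) hgt.ne').2
        (hqr p hpp hgt hpm)) _

theorem stmt_6 (m : ℕ) (hm : 0 < m) :
    (∃ x : ℤ, Int.ModEq m (x ^ 2 + x + 1) 0) ↔
    (Odd m ∧ ¬ (9 ∣ m) ∧
      ∀ p : ℕ, p.Prime → 3 < p → p ∣ m → IsQuadraticResidue (-3) p) := by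
  rw [exists_intModEq_sq_add_add_one_iff]
  constructor
  · intro h
    have root_of_dvd {d : ℕ} (hd : d ∣ m) : ∃ y : ZMod d, y ^ 2 + y + 1 = 0 :=
      exists_sq_add_add_one_eq_zero_of_ringHom (ZMod.castHom hd _) h
    refine ⟨Nat.not_even_iff_odd.1 fun h2 => ?_, fun h9 => ?_, fun p hp hp3 hpm => ?_⟩
    · exact absurd (root_of_dvd (even_iff_two_dvd.1 h2)) (by decide)
    · exact absurd (root_of_dvd h9) (by decide)
    · have := Fact.mk hp
      exact (ZMod.exists_sq_add_add_one_eq_zero_iff_isQuadraticResidue (by omega) hp3.ne').1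
        (root_of_dvd hpm)
  · rintro ⟨hodd, h9, hqr⟩
    choose y hy using fun p : m.primeFactors =>
      exists_sq_add_add_one_eq_zero_zmod_ordProj hodd h9 hqr p.2
    exact exists_sq_add_add_one_eq_zero_of_ringHom (ZMod.equivPi m hm.ne').symm.toRingHom
      ⟨y, funext hy⟩
end

section
/- Let m be a positive integer. The congruence x² + 3x + 3 ≡ 0 (mod m) has an integer solution if and only if m is odd, 9 ∤ m, and for every prime p > 3 dividing m, −3 is a quadratic residue modulo p. -/
/-!
Write `f = X² + 3X + 3`, so that `4 f(x) = (2x + 3)² + 3`. Solvability of `f ≡ 0` modulo `m`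
is multiplicative in coprime factors (Chinese remainder theorem), so it suffices to treat prime
powers. Modulo `2` and `9` the congruence has no solution (finite check), and modulo `3` the
root `0` works. For a prime `p > 3`, a root modulo `p` is the same as a square root of `-3`,
via `y = 2x + 3`; since `f'(x) = 2x + 3` is then prime to `p`, Hensel's lemma lifts it to
every power of `p`.
-/

open Polynomial

def HasRootMod (f : ℤ[X]) (m : ℤ) : Prop :=
  ∃ x : ℤ, m ∣ f.eval x

theorem dvd_eval_of_dvd_sub {f : ℤ[X]} {a x z : ℤ} (hzx : a ∣ z - x) (hx : a ∣ f.eval x) :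
    a ∣ f.eval z :=
  (dvd_sub_left hx).1 (hzx.trans (sub_dvd_eval_sub z x f))

namespace HasRootMod

variable {f : ℤ[X]}

theorem of_dvd {m n : ℤ} (h : HasRootMod f m) (hnm : n ∣ m) : HasRootMod f n :=
  let ⟨x, hx⟩ := h
  ⟨x, hnm.trans hx⟩

theorem mul {a b : ℤ} (ha : HasRootMod f a) (hb : HasRootMod f b) (hab : IsCoprime a b) :
    HasRootMod f (a * b) := by
  obtain ⟨x, hx⟩ := ha
  obtain ⟨y, hy⟩ := hb
  obtain ⟨u, v, huv⟩ := hab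
  refine ⟨x * (v * b) + y * (u * a), IsCoprime.mul_dvd ⟨u, v, huv⟩ ?_ ?_⟩
  · exact dvd_eval_of_dvd_sub ⟨(y - x) * u, by linear_combination x * huv⟩ hx
  · exact dvd_eval_of_dvd_sub ⟨(x - y) * v, by linear_combination y * huv⟩ hy

theorem of_prime_pow {m : ℕ} (hm : m ≠ 0)
    (h : ∀ p n : ℕ, p.Prime → 0 < n → p ^ n ∣ m → HasRootMod f ↑(p ^ n)) :
    HasRootMod f m := by
  suffices ∀ d, d ∣ m → HasRootMod f d from this m dvd_rfl
  intro d
  induction d using Nat.recOnPosPrimePosCoprime with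
  | prime_pow p n hp hn => exact h p n hp hn
  | zero => exact fun h0 => absurd (Nat.eq_zero_of_zero_dvd h0) hm
  | one => exact fun _ => ⟨0, by simp⟩
  | coprime a b _ _ hab iha ihb =>
    intro hd
    push_cast
    exact (iha (dvd_of_mul_right_dvd hd)).mul (ihb (dvd_of_mul_left_dvd hd))
      (Nat.isCoprime_iff_coprime.2 hab)

end HasRootMod

/-- One Hensel step: `y = x + t pᵏ⁺¹` with `t f'(x) ≡ -f(x) / pᵏ⁺¹ (mod p)`. -/
theorem exists_pow_succ_dvd_eval {f : ℤ[X]} {p x : ℤ} {k : ℕ} (hx : p ^ (k + 1) ∣ f.eval x)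
    (hd : IsCoprime p (f.derivative.eval x)) :
    ∃ y, p ∣ y - x ∧ p ^ (k + 2) ∣ f.eval y := by
  obtain ⟨c, hc⟩ := hx
  obtain ⟨u, v, huv⟩ := hd
  obtain ⟨K, hK⟩ := binomExpansion f x (-c * v * p ^ (k + 1))
  refine ⟨x + -c * v * p ^ (k + 1), ⟨-c * v * p ^ k, by ring⟩, ?_⟩
  rw [hK]
  exact ⟨c * u + K * c ^ 2 * v ^ 2 * p ^ k, by linear_combination hc - p ^ (k + 1) * c * huv⟩

theorem hasRootMod_pow_of_isCoprime_derivative {f : ℤ[X]} {p x : ℤ} (hx : p ∣ f.eval x)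
    (hd : IsCoprime p (f.derivative.eval x)) (n : ℕ) : HasRootMod f (p ^ n) := by
  suffices ∀ n : ℕ, ∃ y, p ^ (n + 1) ∣ f.eval y ∧ IsCoprime p (f.derivative.eval y) by
    obtain ⟨y, hy, -⟩ := this n
    exact ⟨y, (pow_dvd_pow p n.le_succ).trans hy⟩
  intro n
  induction n with
  | zero => exact ⟨x, by simpa using hx, hd⟩
  | succ k ih =>
    obtain ⟨y, hy, hdy⟩ := ih
    obtain ⟨z, hzy, hz⟩ := exists_pow_succ_dvd_eval hy hdy
    obtain ⟨w, hw⟩ := hzy.trans (sub_dvd_eval_sub z y (derivative f))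
    refine ⟨z, hz, ?_⟩
    rw [show f.derivative.eval z = f.derivative.eval y + p * w by linear_combination hw]
    exact hdy.add_mul_left_right w

noncomputable def quadPoly : ℤ[X] := X ^ 2 + 3 * X + 3

@[simp]
theorem eval_quadPoly (x : ℤ) : quadPoly.eval x = x ^ 2 + 3 * x + 3 := by
  simp [quadPoly]

@[simp]
theorem eval_derivative_quadPoly (x : ℤ) : quadPoly.derivative.eval x = 2 * x + 3 := by
  simp [quadPoly]

theorem four_mul_eval_quadPoly (x : ℤ) : 4 * quadPoly.eval x = (2 * x + 3) ^ 2 + 3 := by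
  simp only [eval_quadPoly]
  ring

theorem not_hasRootMod_quadPoly_of_zmod (n : ℕ) (h : ∀ z : ZMod n, z ^ 2 + 3 * z + 3 ≠ 0) :
    ¬ HasRootMod quadPoly n := by
  rintro ⟨x, hx⟩
  apply h x
  exact_mod_cast (ZMod.intCast_zmod_eq_zero_iff_dvd _ n).2 (by simpa using hx)

theorem not_natCast_dvd_of_pos_of_lt {p : ℕ} {k : ℤ} (hk : 0 < k) (hkp : k < p) : ¬ (p : ℤ) ∣ k :=
  fun h => (Int.le_of_dvd hk h).not_gt hkp

theorem isQuadraticResidue_neg_three_of_hasRootMod {p : ℕ} (hp : 3 < p)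
    (h : HasRootMod quadPoly p) : IsQuadraticResidue (-3) p := by
  obtain ⟨x, hx⟩ := h
  refine ⟨fun h3 => not_natCast_dvd_of_pos_of_lt three_pos (by exact_mod_cast hp) (dvd_neg.1 h3),
    2 * x + 3, Int.modEq_iff_dvd.2 ?_⟩
  rw [show -3 - (2 * x + 3) ^ 2 = -(4 * quadPoly.eval x) by rw [four_mul_eval_quadPoly]; ring]
  exact (hx.mul_left 4).neg_right

theorem hasRootMod_quadPoly_three : HasRootMod quadPoly 3 :=
  ⟨0, by simp⟩

/-- A square root `y` of `-3` modulo `p` gives the root `x = (y - 3) / 2` of `f`. -/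
theorem hasRootMod_quadPoly_of_dvd_sq_add_three {p y : ℤ} (h2 : IsCoprime p 2)
    (hy : p ∣ y ^ 2 + 3) : HasRootMod quadPoly p := by
  obtain ⟨u, v, huv⟩ := h2
  set x := v * (y - 3)
  set s := u * (y - 3)
  have h4 : p ∣ 4 * quadPoly.eval x := by
    rw [four_mul_eval_quadPoly]
    refine (dvd_add hy (dvd_mul_right p (p * s ^ 2 - 2 * y * s))).trans (dvd_of_eq ?_)
    linear_combination (-(y - 3) * (2 * x + 3 + y - p * s)) * huv
  exact ⟨x, (IsCoprime.pow_right (n := 2) ⟨u, v, huv⟩).dvd_of_dvd_mul_left (by simpa using h4)⟩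

theorem hasRootMod_quadPoly_prime_pow {p : ℕ} (hp : p.Prime) (hp3 : 3 < p)
    (hqr : IsQuadraticResidue (-3) p) (n : ℕ) : HasRootMod quadPoly ↑(p ^ n) := by
  have hpZ : Prime (p : ℤ) := Nat.prime_iff_prime_int.1 hp
  have hp3' : (3 : ℤ) < p := by exact_mod_cast hp3
  obtain ⟨-, y, hy⟩ := hqr
  obtain ⟨x, hx⟩ := hasRootMod_quadPoly_of_dvd_sq_add_three
    (hpZ.coprime_iff_not_dvd.2 (not_natCast_dvd_of_pos_of_lt two_pos (by omega)))
    (by simpa using hy.dvd.neg_right)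
  have hd : IsCoprime (p : ℤ) (2 * x + 3) := by
    refine hpZ.coprime_iff_not_dvd.2 fun h => not_natCast_dvd_of_pos_of_lt three_pos hp3' ?_
    have := dvd_sub (hx.mul_left 4) (dvd_pow h two_ne_zero)
    rwa [four_mul_eval_quadPoly, add_sub_cancel_left] at this
  push_cast
  exact hasRootMod_pow_of_isCoprime_derivative hx (by simpa using hd) n

theorem stmt_11 (m : ℕ) (hm : 0 < m) :
    (∃ x : ℤ, Int.ModEq m (x ^ 2 + 3 * x + 3) 0) ↔
    (Odd m ∧ ¬ (9 ∣ m) ∧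
      ∀ p : ℕ, p.Prime → 3 < p → p ∣ m → IsQuadraticResidue (-3) p) := by
  have hroot : (∃ x : ℤ, Int.ModEq m (x ^ 2 + 3 * x + 3) 0) ↔ HasRootMod quadPoly m := by
    simp [HasRootMod, Int.modEq_zero_iff_dvd]
  rw [hroot]
  constructor
  · intro h
    refine ⟨?_, fun h9 => ?_, fun p _ hp3 hpm => ?_⟩
    · by_contra hev
      exact not_hasRootMod_quadPoly_of_zmod 2 (by decide)
        (h.of_dvd (Int.natCast_dvd_natCast.2 (Nat.not_odd_iff_even.1 hev).two_dvd))
    · exact not_hasRootMod_quadPoly_of_zmod 9 (by decide)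
        (h.of_dvd (Int.natCast_dvd_natCast.2 h9))
    · exact isQuadraticResidue_neg_three_of_hasRootMod hp3
        (h.of_dvd (Int.natCast_dvd_natCast.2 hpm))
  · rintro ⟨hodd, h9, hqr⟩
    refine HasRootMod.of_prime_pow hm.ne' fun p n hp hn hpn => ?_
    obtain rfl | rfl | hp3 : p = 2 ∨ p = 3 ∨ 3 < p := by have := hp.two_le; omega
    · exact absurd (Nat.even_pow.2 ⟨even_two, hn.ne'⟩) (Nat.not_even_iff_odd.2 (hodd.of_dvd_nat hpn))
    · obtain rfl : n = 1 := by
        by_contra hn1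
        exact h9 ((Nat.pow_dvd_pow 3 (by omega : 2 ≤ n)).trans hpn)
      simpa using hasRootMod_quadPoly_three
    · exact hasRootMod_quadPoly_prime_pow hp hp3 (hqr p hp hp3 ((dvd_pow_self p hn.ne').trans hpn)) n
end

section
/- Let f(x) = a·x² + b·x + c with integers a, b, c, where a and b are both odd. Then the congruence f(x) ≡ 0 (mod 2^k) (for any k ≥ 1) has an integer solution if and only if c is even. -/
lemma aux14 (a b c : ℤ) (hb : Odd b) (hc : Even c) :
    ∀ k : ℕ, 1 ≤ k → ∃ x : ℤ, (2:ℤ) ^ k ∣ a * x ^ 2 + b * x + c := by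
  intro k hk
  induction k, hk using Nat.le_induction with
  | base =>
    obtain ⟨d, hd⟩ := hc
    exact ⟨0, ⟨d, by ring_nf; omega⟩⟩
  | succ k hk ih =>
    obtain ⟨x, m, hm⟩ := ih
    obtain ⟨n, hn⟩ := hb
    refine ⟨x + m * 2 ^ k, (m * (1 + a * x + n) + a * m ^ 2 * 2 ^ (k - 1)), ?_⟩
    have hk' : k = (k - 1) + 1 := (Nat.succ_pred_eq_of_pos hk).symm
    calc a * (x + m * 2 ^ k) ^ 2 + b * (x + m * 2 ^ k) + c
        = (a * x ^ 2 + b * x + c) + 2 ^ k * (m * (2 * a * x + b)) +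
          a * m ^ 2 * (2 ^ k * 2 ^ k) := by ring
      _ = 2 ^ (k + 1) * (m * (1 + a * x + n) + a * m ^ 2 * 2 ^ (k - 1)) := by
          rw [hm, hn]
          nth_rewrite 3 [hk']
          ring

theorem stmt_14 (a b c : ℤ) (ha : Odd a) (hb : Odd b) (k : ℕ) (hk : 1 ≤ k) :
    (∃ x : ℤ, Int.ModEq (2 ^ k) (a * x ^ 2 + b * x + c) 0) ↔ Even c := by
  constructor
  · rintro ⟨x, hx⟩
    have h2 : (2:ℤ) ∣ a * x ^ 2 + b * x + c :=
      dvd_trans (dvd_pow_self 2 (Nat.one_le_iff_ne_zero.mp hk))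
        ((Int.modEq_zero_iff_dvd).mp hx)
    have hxe : Even (a * x ^ 2 + b * x) := by
      rcases Int.even_or_odd x with hx' | hx'
      · obtain ⟨u, hu⟩ := hx'
        exact ⟨2*a*u*u + b*u, by rw [hu]; ring⟩
      · obtain ⟨p, hp⟩ := ha
        obtain ⟨q, hq⟩ := hb
        obtain ⟨r, hr⟩ := hx'
        exact ⟨4*p*r^2+4*p*r+p+2*r^2+3*r+2*q*r+q+1, by rw [hp, hq, hr]; ring⟩
    obtain ⟨s, hs⟩ := hxe
    obtain ⟨t, ht⟩ := h2
    exact ⟨t - s, by omega⟩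
  · intro hc
    obtain ⟨x, hx⟩ := aux14 a b c hb hc k hk
    exact ⟨x, (Int.modEq_zero_iff_dvd).mpr hx⟩
end
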